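/- arXiv:1907.05607 — 9 statements merged into one kernel-verified Lean document; each statement's English description precedes it below -/
import Mathlib

section
/- Any Local Hidden Variable (LHV) correlation is also a Local Friendliness (LF) correlation. That is, if the empirical probabilities ℘(a,b|x,y) admit a decomposition ℘(a,b|x,y) = Σ_λ P(a|x,λ)P(b|y,λ)P(λ) over a finite set Λ, then they also satisfy the LF form: for x=1, ℘(a,b|1,y) = Σ_{c,d} δ_{a,c} P(b|c,d,y) P(c,d); for y=1, ℘(a,b|x,1) = Σ_{c,d} δ_{b,d} P(a|c,d,x) P(c,d); and for x≠1, y≠1, ℘(a,b|x,y) = Σ_{c,d} P_NS(a,b|c,d,x,y) P(c,d) where each P_NS(·|c,d,x,y) is a no-signalling family (i.e., Σ_a P_NS(a,b|c,d,x,y) is independent of x and Σ_b P_NS(a,b|c,d,x,y) is independent of y). -/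
/-- Any LHV correlation is also an LF correlation.
Settings range over `Fin (n+2)` (so `N = n+2 ≥ 2`), outcomes over `Fin (o+2)`
(so `O = o+2 ≥ 2`); the distinguished setting "1" is `0 : Fin (n+2)`. -/
theorem lhv_correlations_are_lf_correlations (o n : ℕ) (Λ : Type) [Fintype Λ]
    (℘ : Fin (o+2) → Fin (o+2) → Fin (n+2) → Fin (n+2) → ℝ)
    (Pl : Λ → ℝ) (hPl : ∀ l, 0 ≤ Pl l) (hPlsum : ∑ l, Pl l = 1)
    (PA : Fin (o+2) → Fin (n+2) → Λ → ℝ)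
    (PB : Fin (o+2) → Fin (n+2) → Λ → ℝ)
    (hPA0 : ∀ a x l, 0 ≤ PA a x l) (hPA1 : ∀ x l, ∑ a, PA a x l = 1)
    (hPB0 : ∀ b y l, 0 ≤ PB b y l) (hPB1 : ∀ y l, ∑ b, PB b y l = 1)
    (hLHV : ∀ a b x y, ℘ a b x y = ∑ l, PA a x l * PB b y l * Pl l) :
    ∃ (Pcd : Fin (o+2) → Fin (o+2) → ℝ)
      (Pb : Fin (o+2) → Fin (o+2) → Fin (o+2) → Fin (n+2) → ℝ)
      (Pa : Fin (o+2) → Fin (o+2) → Fin (o+2) → Fin (n+2) → ℝ)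
      (PNS : Fin (o+2) → Fin (o+2) → Fin (o+2) → Fin (o+2) → Fin (n+2) → Fin (n+2) → ℝ),
      -- P(c,d) is a probability distribution
      (∀ c d, 0 ≤ Pcd c d) ∧ (∑ c, ∑ d, Pcd c d = 1) ∧
      -- P(b|c,d,y) and P(a|c,d,x) are conditional distributions
      (∀ b c d y, 0 ≤ Pb b c d y) ∧ (∀ c d y, ∑ b, Pb b c d y = 1) ∧
      (∀ a c d x, 0 ≤ Pa a c d x) ∧ (∀ c d x, ∑ a, Pa a c d x = 1) ∧
      -- P_NS(a,b|c,d,x,y) is a no-signalling family of distributions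
      (∀ a b c d x y, 0 ≤ PNS a b c d x y) ∧
      (∀ c d x y, ∑ a, ∑ b, PNS a b c d x y = 1) ∧
      (∀ b c d x x' y, ∑ a, PNS a b c d x y = ∑ a, PNS a b c d x' y) ∧
      (∀ a c d x y y', ∑ b, PNS a b c d x y = ∑ b, PNS a b c d x y') ∧
      -- the LF decomposition
      (∀ a b y, ℘ a b 0 y = ∑ c, ∑ d, (if a = c then (1:ℝ) else 0) * Pb b c d y * Pcd c d) ∧
      (∀ a b x, ℘ a b x 0 = ∑ c, ∑ d, (if b = d then (1:ℝ) else 0) * Pa a c d x * Pcd c d) ∧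
      (∀ a b x y, x ≠ 0 → y ≠ 0 →
        ℘ a b x y = ∑ c, ∑ d, PNS a b c d x y * Pcd c d) := by
  classical
  -- base weight
  set w : Fin (o+2) → Fin (o+2) → Λ → ℝ := fun c d l => PA c 0 l * PB d 0 l * Pl l with hw
  set Q : Fin (o+2) → Fin (o+2) → ℝ := fun c d => ∑ l, w c d l with hQdef
  have hw0 : ∀ c d l, 0 ≤ w c d l := fun c d l =>
    mul_nonneg (mul_nonneg (hPA0 _ _ _) (hPB0 _ _ _)) (hPl _)
  have hQ0 : ∀ c d, 0 ≤ Q c d := fun c d => Finset.sum_nonneg fun l _ => hw0 c d l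
  have hQzero : ∀ c d, Q c d = 0 → ∀ l, w c d l = 0 := by
    intro c d h l
    exact (Finset.sum_eq_zero_iff_of_nonneg (fun l _ => hw0 c d l)).mp h l (Finset.mem_univ l)
  -- numerators
  set NB : Fin (o+2) → Fin (o+2) → Fin (o+2) → Fin (n+2) → ℝ :=
    fun b c d y => ∑ l, w c d l * PB b y l with hNB
  set NA : Fin (o+2) → Fin (o+2) → Fin (o+2) → Fin (n+2) → ℝ :=
    fun a c d x => ∑ l, w c d l * PA a x l with hNA
  set NN : Fin (o+2) → Fin (o+2) → Fin (o+2) → Fin (o+2) → Fin (n+2) → Fin (n+2) → ℝ :=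
    fun a b c d x y => ∑ l, w c d l * (PA a x l * PB b y l) with hNN
  have hNB0 : ∀ b c d y, 0 ≤ NB b c d y := fun b c d y =>
    Finset.sum_nonneg fun l _ => mul_nonneg (hw0 c d l) (hPB0 _ _ _)
  have hNA0 : ∀ a c d x, 0 ≤ NA a c d x := fun a c d x =>
    Finset.sum_nonneg fun l _ => mul_nonneg (hw0 c d l) (hPA0 _ _ _)
  have hNN0 : ∀ a b c d x y, 0 ≤ NN a b c d x y := fun a b c d x y =>
    Finset.sum_nonneg fun l _ => mul_nonneg (hw0 c d l) (mul_nonneg (hPA0 _ _ _) (hPB0 _ _ _))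
  have hNBsum : ∀ c d y, ∑ b, NB b c d y = Q c d := by
    intro c d y
    rw [Finset.sum_comm]
    simp only [← Finset.mul_sum, hPB1, mul_one, hQdef]
  have hNAsum : ∀ c d x, ∑ a, NA a c d x = Q c d := by
    intro c d x
    rw [Finset.sum_comm]
    simp only [← Finset.mul_sum, hPA1, mul_one, hQdef]
  have hNNa : ∀ b c d x y, ∑ a, NN a b c d x y = NB b c d y := by
    intro b c d x y
    rw [Finset.sum_comm]
    refine Finset.sum_congr rfl fun l _ => ?_
    rw [← Finset.mul_sum, ← Finset.sum_mul, hPA1, one_mul]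
  have hNNb : ∀ a c d x y, ∑ b, NN a b c d x y = NA a c d x := by
    intro a c d x y
    rw [Finset.sum_comm]
    refine Finset.sum_congr rfl fun l _ => ?_
    rw [← Finset.mul_sum, ← Finset.mul_sum, hPB1, mul_one]
  have hNBzero : ∀ b c d y, Q c d = 0 → NB b c d y = 0 := by
    intro b c d y h
    exact Finset.sum_eq_zero fun l _ => by rw [hQzero c d h l, zero_mul]
  have hNAzero : ∀ a c d x, Q c d = 0 → NA a c d x = 0 := by
    intro a c d x h
    exact Finset.sum_eq_zero fun l _ => by rw [hQzero c d h l, zero_mul]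
  have hNNzero : ∀ a b c d x y, Q c d = 0 → NN a b c d x y = 0 := by
    intro a b c d x y h
    exact Finset.sum_eq_zero fun l _ => by rw [hQzero c d h l, zero_mul]
  -- marginal sums of the numerators over the second base outcome
  have hNBd : ∀ a b y, ∑ d, NB b a d y = ℘ a b 0 y := by
    intro a b y
    rw [hLHV]
    rw [Finset.sum_comm]
    refine Finset.sum_congr rfl fun l _ => ?_
    rw [show (∑ d, w a d l * PB b y l) = ∑ d, PB d 0 l * (PA a 0 l * PB b y l * Pl l) from
      Finset.sum_congr rfl fun d _ => by simp only [hw]; ring]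
    rw [← Finset.sum_mul, hPB1, one_mul]
  have hNAc : ∀ a b x, ∑ c, NA a c b x = ℘ a b x 0 := by
    intro a b x
    rw [hLHV]
    rw [Finset.sum_comm]
    refine Finset.sum_congr rfl fun l _ => ?_
    rw [show (∑ c, w c b l * PA a x l) = ∑ c, PA c 0 l * (PA a x l * PB b 0 l * Pl l) from
      Finset.sum_congr rfl fun c _ => by simp only [hw]; ring]
    rw [← Finset.sum_mul, hPA1, one_mul]
  have hNNcd : ∀ a b x y, ∑ c, ∑ d, NN a b c d x y = ℘ a b x y := by
    intro a b x y
    rw [hLHV]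
    rw [show (∑ c, ∑ d, NN a b c d x y) = ∑ c, ∑ l, ∑ d, w c d l * (PA a x l * PB b y l) from
      Finset.sum_congr rfl fun c _ => by rw [Finset.sum_comm]]
    rw [Finset.sum_comm]
    refine Finset.sum_congr rfl fun l _ => ?_
    rw [show (∑ c, ∑ d, w c d l * (PA a x l * PB b y l)) =
      ∑ c, PA c 0 l * ((∑ d, PB d 0 l) * (PA a x l * PB b y l * Pl l)) from
      Finset.sum_congr rfl fun c _ => by
        rw [Finset.sum_mul, Finset.mul_sum]
        exact Finset.sum_congr rfl fun d _ => by simp only [hw]; ring]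
    rw [← Finset.sum_mul, hPA1, hPB1, one_mul, one_mul]
  refine ⟨Q,
    fun b c d y => if Q c d = 0 then (if b = 0 then 1 else 0) else NB b c d y / Q c d,
    fun a c d x => if Q c d = 0 then (if a = 0 then 1 else 0) else NA a c d x / Q c d,
    fun a b c d x y => if Q c d = 0 then (if a = 0 then 1 else 0) * (if b = 0 then 1 else 0)
      else NN a b c d x y / Q c d,
    hQ0, ?_, ?_, ?_, ?_, ?_, ?_, ?_, ?_, ?_, ?_, ?_, ?_⟩
  · -- total probability 1
    rw [show (∑ c, ∑ d, Q c d) = ∑ c, ∑ l, ∑ d, w c d l from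
      Finset.sum_congr rfl fun c _ => by rw [Finset.sum_comm]]
    rw [Finset.sum_comm, ← hPlsum]
    refine Finset.sum_congr rfl fun l _ => ?_
    rw [show (∑ c, ∑ d, w c d l) = ∑ c, PA c 0 l * ((∑ d, PB d 0 l) * Pl l) from
      Finset.sum_congr rfl fun c _ => by
        rw [Finset.sum_mul, Finset.mul_sum]
        exact Finset.sum_congr rfl fun d _ => by simp only [hw]; ring]
    rw [← Finset.sum_mul, hPA1, hPB1, one_mul, one_mul]
  · -- Pb nonneg
    intro b c d y
    by_cases h : Q c d = 0
    · dsimp only; rw [if_pos h]; split_ifs <;> norm_num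
    · dsimp only; rw [if_neg h]; exact div_nonneg (hNB0 b c d y) (hQ0 c d)
  · -- Pb sums to 1
    intro c d y
    by_cases h : Q c d = 0
    · simp [h]
    · simp only [if_neg h]
      rw [← Finset.sum_div, hNBsum, div_self h]
  · -- Pa nonneg
    intro a c d x
    by_cases h : Q c d = 0
    · dsimp only; rw [if_pos h]; split_ifs <;> norm_num
    · dsimp only; rw [if_neg h]; exact div_nonneg (hNA0 a c d x) (hQ0 c d)
  · -- Pa sums to 1
    intro c d x
    by_cases h : Q c d = 0
    · simp [h]
    · simp only [if_neg h]
      rw [← Finset.sum_div, hNAsum, div_self h]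
  · -- PNS nonneg
    intro a b c d x y
    by_cases h : Q c d = 0
    · dsimp only; rw [if_pos h]; split_ifs <;> norm_num
    · dsimp only; rw [if_neg h]; exact div_nonneg (hNN0 a b c d x y) (hQ0 c d)
  · -- PNS sums to 1
    intro c d x y
    by_cases h : Q c d = 0
    · simp [h, ← Finset.sum_mul]
    · simp only [if_neg h, ← Finset.sum_div]
      rw [show (∑ a, ∑ b, NN a b c d x y) = Q c d from by
        rw [Finset.sum_congr rfl fun a _ => hNNb a c d x y]; exact hNAsum c d x,
        div_self h]
  · -- no-signalling in x
    intro b c d x x' y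
    by_cases h : Q c d = 0
    · simp [h]
    · simp only [if_neg h, ← Finset.sum_div, hNNa]
  · -- no-signalling in y
    intro a c d x y y'
    by_cases h : Q c d = 0
    · simp [h]
    · simp only [if_neg h, ← Finset.sum_div, hNNb]
  · -- LF decomposition at x = 0
    intro a b y
    have key : ∀ c d, (if Q c d = 0 then (if b = 0 then (1:ℝ) else 0) else NB b c d y / Q c d)
        * Q c d = NB b c d y := by
      intro c d
      by_cases h : Q c d = 0
      · rw [if_pos h, h, mul_zero, hNBzero b c d y h]
      · rw [if_neg h, div_mul_cancel₀ _ h]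
    calc ℘ a b 0 y = ∑ d, NB b a d y := (hNBd a b y).symm
      _ = _ := by
          rw [show (∑ c, ∑ d, (if a = c then (1:ℝ) else 0) *
            (if Q c d = 0 then (if b = 0 then (1:ℝ) else 0) else NB b c d y / Q c d) * Q c d)
            = ∑ c, ∑ d, (if a = c then (1:ℝ) else 0) * NB b c d y from
            Finset.sum_congr rfl fun c _ => Finset.sum_congr rfl fun d _ => by
              rw [mul_assoc, key c d]]
          simp [ite_mul, Finset.sum_ite_eq, ← Finset.mul_sum]
  · -- LF decomposition at y = 0
    intro a b x
    have key : ∀ c d, (if Q c d = 0 then (if a = 0 then (1:ℝ) else 0) else NA a c d x / Q c d)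
        * Q c d = NA a c d x := by
      intro c d
      by_cases h : Q c d = 0
      · rw [if_pos h, h, mul_zero, hNAzero a c d x h]
      · rw [if_neg h, div_mul_cancel₀ _ h]
    calc ℘ a b x 0 = ∑ c, NA a c b x := (hNAc a b x).symm
      _ = _ := by
          rw [show (∑ c, ∑ d, (if b = d then (1:ℝ) else 0) *
            (if Q c d = 0 then (if a = 0 then (1:ℝ) else 0) else NA a c d x / Q c d) * Q c d)
            = ∑ c, ∑ d, (if b = d then (1:ℝ) else 0) * NA a c d x from
            Finset.sum_congr rfl fun c _ => Finset.sum_congr rfl fun d _ => by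
              rw [mul_assoc, key c d]]
          simp [ite_mul, Finset.sum_ite_eq]
  · -- LF decomposition at x ≠ 0, y ≠ 0
    intro a b x y _ _
    have key : ∀ c d, (if Q c d = 0 then (if a = 0 then (1:ℝ) else 0) * (if b = 0 then (1:ℝ) else 0)
        else NN a b c d x y / Q c d) * Q c d = NN a b c d x y := by
      intro c d
      by_cases h : Q c d = 0
      · rw [if_pos h, h, mul_zero, hNNzero a b c d x y h]
      · rw [if_neg h, div_mul_cancel₀ _ h]
    rw [show (∑ c, ∑ d, (if Q c d = 0 then (if a = 0 then (1:ℝ) else 0) * (if b = 0 then (1:ℝ) else 0)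
      else NN a b c d x y / Q c d) * Q c d) = ∑ c, ∑ d, NN a b c d x y from
      Finset.sum_congr rfl fun c _ => Finset.sum_congr rfl fun d _ => key c d]
    exact (hNNcd a b x y).symm
end

section
/- Every LHV correlation with binary outcomes and three settings per party (±1-valued random variables A₁,A₂,A₃,B₁,B₂,B₃) satisfies the Genuine LF inequality: −⟨A₁⟩ − ⟨A₂⟩ − ⟨B₁⟩ − ⟨B₂⟩ − ⟨A₁B₁⟩ − 2⟨A₁B₂⟩ − 2⟨A₂B₁⟩ + 2⟨A₂B₂⟩ − ⟨A₂B₃⟩ − ⟨A₃B₂⟩ − ⟨A₃B₃⟩ ≤ 6. -/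
lemma pointwise_lf (a1 a2 a3 b1 b2 b3 : ℝ)
    (ha1 : a1 = 1 ∨ a1 = -1) (ha2 : a2 = 1 ∨ a2 = -1) (ha3 : a3 = 1 ∨ a3 = -1)
    (hb1 : b1 = 1 ∨ b1 = -1) (hb2 : b2 = 1 ∨ b2 = -1) (hb3 : b3 = 1 ∨ b3 = -1) :
    -a1 - a2 - b1 - b2 - a1*b1 - 2*(a1*b2) - 2*(a2*b1) + 2*(a2*b2)
      - a2*b3 - a3*b2 - a3*b3 ≤ 6 := by
  rcases ha1 with h|h <;> rcases ha2 with h2|h2 <;> rcases ha3 with h3|h3 <;>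
    rcases hb1 with g|g <;> rcases hb2 with g2|g2 <;> rcases hb3 with g3|g3 <;>
    subst h h2 h3 g g2 g3 <;> norm_num

/-- Every LHV correlation (finite probability space with
deterministic ±1-valued observables, three settings per party) satisfies the
Genuine LF inequality. Indexing: `A 0 = A₁, A 1 = A₂, A 2 = A₃`, similarly `B`. -/
theorem lhv_satisfies_genuine_lf_inequality
    (Λ : Type) [Fintype Λ] (P : Λ → ℝ)
    (hP0 : ∀ l, 0 ≤ P l) (hP1 : ∑ l, P l = 1)
    (A B : Fin 3 → Λ → ℝ)
    (hA : ∀ x l, A x l = 1 ∨ A x l = -1)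
    (hB : ∀ y l, B y l = 1 ∨ B y l = -1) :
    -(∑ l, P l * A 0 l) - (∑ l, P l * A 1 l)
      - (∑ l, P l * B 0 l) - (∑ l, P l * B 1 l)
      - (∑ l, P l * (A 0 l * B 0 l)) - 2 * (∑ l, P l * (A 0 l * B 1 l))
      - 2 * (∑ l, P l * (A 1 l * B 0 l)) + 2 * (∑ l, P l * (A 1 l * B 1 l))
      - (∑ l, P l * (A 1 l * B 2 l)) - (∑ l, P l * (A 2 l * B 1 l))
      - (∑ l, P l * (A 2 l * B 2 l)) ≤ 6 := by
  have key : ∀ l, P l * (-(A 0 l) - A 1 l - B 0 l - B 1 l - A 0 l * B 0 l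
      - 2*(A 0 l * B 1 l) - 2*(A 1 l * B 0 l) + 2*(A 1 l * B 1 l)
      - A 1 l * B 2 l - A 2 l * B 1 l - A 2 l * B 2 l) ≤ P l * 6 := fun l =>
    mul_le_mul_of_nonneg_left
      (pointwise_lf _ _ _ _ _ _ (hA 0 l) (hA 1 l) (hA 2 l) (hB 0 l) (hB 1 l) (hB 2 l))
      (hP0 l)
  calc -(∑ l, P l * A 0 l) - (∑ l, P l * A 1 l)
      - (∑ l, P l * B 0 l) - (∑ l, P l * B 1 l)
      - (∑ l, P l * (A 0 l * B 0 l)) - 2 * (∑ l, P l * (A 0 l * B 1 l))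
      - 2 * (∑ l, P l * (A 1 l * B 0 l)) + 2 * (∑ l, P l * (A 1 l * B 1 l))
      - (∑ l, P l * (A 1 l * B 2 l)) - (∑ l, P l * (A 2 l * B 1 l))
      - (∑ l, P l * (A 2 l * B 2 l))
      = ∑ l, P l * (-(A 0 l) - A 1 l - B 0 l - B 1 l - A 0 l * B 0 l
        - 2*(A 0 l * B 1 l) - 2*(A 1 l * B 0 l) + 2*(A 1 l * B 1 l)
        - A 1 l * B 2 l - A 2 l * B 1 l - A 2 l * B 2 l) := by
        simp only [Finset.mul_sum, ← Finset.sum_neg_distrib, ← Finset.sum_sub_distrib,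
          ← Finset.sum_add_distrib]
        congr 1; funext l; ring
    _ ≤ ∑ l, P l * 6 := Finset.sum_le_sum fun l _ => key l
    _ = 6 := by rw [← Finset.sum_mul, hP1, one_mul]
end

section
/- For all deterministic assignments A₁,A₂,A₃,B₁,B₂,B₃ ∈ {+1,−1}, the expression −A₁ − A₂ − B₁ − B₂ − A₁B₁ − 2A₁B₂ − 2A₂B₁ + 2A₂B₂ − A₂B₃ − A₃B₂ − A₃B₃ is at most 6, and the bound 6 is attained for some assignment. -/
/-- For all deterministic ±1 assignments, the Genuine LF expression
is at most 6, and the bound 6 is attained. -/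
theorem genuine_lf_deterministic_bound :
    (∀ A₁ A₂ A₃ B₁ B₂ B₃ : ℝ,
      (A₁ = 1 ∨ A₁ = -1) → (A₂ = 1 ∨ A₂ = -1) → (A₃ = 1 ∨ A₃ = -1) →
      (B₁ = 1 ∨ B₁ = -1) → (B₂ = 1 ∨ B₂ = -1) → (B₃ = 1 ∨ B₃ = -1) →
      -A₁ - A₂ - B₁ - B₂ - A₁*B₁ - 2*(A₁*B₂) - 2*(A₂*B₁) + 2*(A₂*B₂)
        - A₂*B₃ - A₃*B₂ - A₃*B₃ ≤ 6) ∧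
    (∃ A₁ A₂ A₃ B₁ B₂ B₃ : ℝ,
      (A₁ = 1 ∨ A₁ = -1) ∧ (A₂ = 1 ∨ A₂ = -1) ∧ (A₃ = 1 ∨ A₃ = -1) ∧
      (B₁ = 1 ∨ B₁ = -1) ∧ (B₂ = 1 ∨ B₂ = -1) ∧ (B₃ = 1 ∨ B₃ = -1) ∧
      -A₁ - A₂ - B₁ - B₂ - A₁*B₁ - 2*(A₁*B₂) - 2*(A₂*B₁) + 2*(A₂*B₂)
        - A₂*B₃ - A₃*B₂ - A₃*B₃ = 6) := by
  constructor
  · rintro A₁ A₂ A₃ B₁ B₂ B₃ (rfl|rfl) (rfl|rfl) (rfl|rfl) (rfl|rfl) (rfl|rfl) (rfl|rfl) <;> norm_num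
  · exact ⟨1, 1, 1, -1, -1, -1, Or.inl rfl, Or.inl rfl, Or.inl rfl, Or.inr rfl, Or.inr rfl, Or.inr rfl, by norm_num⟩
end

section
/- For all deterministic assignments A₁,A₂,A₃,B₁,B₂,B₃ ∈ {+1,−1}, the expression −A₁ − A₂ − A₃ − B₁ − A₁B₁ − A₂B₁ − A₃B₁ − 2A₁B₂ + A₂B₂ + A₃B₂ − A₂B₃ + A₃B₃ is at most 5, and the bound 5 is attained. -/
/-- For all deterministic ±1 assignments, the Genuine LF 2
expression is at most 5, and the bound 5 is attained. -/
theorem genuine_lf2_deterministic_bound :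
    (∀ A₁ A₂ A₃ B₁ B₂ B₃ : ℝ,
      (A₁ = 1 ∨ A₁ = -1) → (A₂ = 1 ∨ A₂ = -1) → (A₃ = 1 ∨ A₃ = -1) →
      (B₁ = 1 ∨ B₁ = -1) → (B₂ = 1 ∨ B₂ = -1) → (B₃ = 1 ∨ B₃ = -1) →
      -A₁ - A₂ - A₃ - B₁ - A₁*B₁ - A₂*B₁ - A₃*B₁ - 2*(A₁*B₂)
        + A₂*B₂ + A₃*B₂ - A₂*B₃ + A₃*B₃ ≤ 5) ∧
    (∃ A₁ A₂ A₃ B₁ B₂ B₃ : ℝ,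
      (A₁ = 1 ∨ A₁ = -1) ∧ (A₂ = 1 ∨ A₂ = -1) ∧ (A₃ = 1 ∨ A₃ = -1) ∧
      (B₁ = 1 ∨ B₁ = -1) ∧ (B₂ = 1 ∨ B₂ = -1) ∧ (B₃ = 1 ∨ B₃ = -1) ∧
      -A₁ - A₂ - A₃ - B₁ - A₁*B₁ - A₂*B₁ - A₃*B₁ - 2*(A₁*B₂)
        + A₂*B₂ + A₃*B₂ - A₂*B₃ + A₃*B₃ = 5) := by
  constructor
  · rintro A₁ A₂ A₃ B₁ B₂ B₃ (rfl|rfl) (rfl|rfl) (rfl|rfl) (rfl|rfl) (rfl|rfl) (rfl|rfl) <;> norm_num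
  · exact ⟨1, 1, -1, -1, -1, -1, Or.inl rfl, Or.inl rfl, Or.inr rfl, Or.inr rfl, Or.inr rfl, Or.inr rfl, by norm_num⟩
end

section
/- The Tsirelson bound: for any Hilbert spaces, any density operator ρ, and Hermitian involutions A₁,A₂ (on the first factor) and B₁,B₂ (on the second factor), Tr[ρ(A₁⊗B₁ + A₁⊗B₂ + A₂⊗B₁ − A₂⊗B₂)] ≤ 2√2. Hence the maximal quantum violation of the Brukner inequality is bounded by 2√2. -/
open Matrix
open scoped Kronecker ComplexOrder

lemma kron_conjTranspose {m n p q : Type*} (A : Matrix m n ℂ) (B : Matrix p q ℂ) :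
    (A ⊗ₖ B)ᴴ = Aᴴ ⊗ₖ Bᴴ := by
  ext ⟨i, j⟩ ⟨k, l⟩
  simp [conjTranspose_apply, mul_comm]

lemma kron_sub {a b : ℕ} (A : Matrix (Fin a) (Fin a) ℂ) (B₁ B₂ : Matrix (Fin b) (Fin b) ℂ) :
    A ⊗ₖ (B₁ - B₂) = A ⊗ₖ B₁ - A ⊗ₖ B₂ := by
  ext ⟨i, j⟩ ⟨k, l⟩; simp [mul_sub]

lemma trace_re_nonneg_of_psd {n : Type*} [Fintype n] [DecidableEq n]
    {M : Matrix n n ℂ} (h : M.PosSemidef) : 0 ≤ M.trace.re := by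
  rw [Matrix.trace, Complex.re_sum]
  refine Finset.sum_nonneg fun i _ => ?_
  have := h.re_dotProduct_nonneg (Pi.single i 1)
  simpa [Matrix.mulVec_single, dotProduct, Pi.single_apply] using this

lemma trace_rho_sq_nonneg {n : Type*} [Fintype n] [DecidableEq n]
    {ρ X : Matrix n n ℂ} (hρ : ρ.PosSemidef) (hX : X.IsHermitian) :
    0 ≤ (ρ * (X * X)).trace.re := by
  have h : (ρ * (X * X)).trace = (X * ρ * Xᴴ).trace := by
    rw [hX.eq, ← Matrix.mul_assoc, Matrix.trace_mul_comm, Matrix.mul_assoc]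
  rw [h]
  exact trace_re_nonneg_of_psd (hρ.mul_mul_conjTranspose_same X)

/-- The Tsirelson bound. For any (finite-dimensional) Hilbert
spaces, density operator ρ and Hermitian involutions A₁, A₂ and B₁, B₂,
`Tr[ρ(A₁⊗B₁ + A₁⊗B₂ + A₂⊗B₁ − A₂⊗B₂)] ≤ 2√2`. -/
theorem tsirelson_bound (dA dB : ℕ)
    (A₁ A₂ : Matrix (Fin dA) (Fin dA) ℂ) (B₁ B₂ : Matrix (Fin dB) (Fin dB) ℂ)
    (hA₁ : A₁.IsHermitian) (hA₂ : A₂.IsHermitian)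
    (hB₁ : B₁.IsHermitian) (hB₂ : B₂.IsHermitian)
    (hA₁i : A₁ * A₁ = 1) (hA₂i : A₂ * A₂ = 1)
    (hB₁i : B₁ * B₁ = 1) (hB₂i : B₂ * B₂ = 1)
    (ρ : Matrix (Fin dA × Fin dB) (Fin dA × Fin dB) ℂ)
    (hρ : ρ.PosSemidef) (hρtr : ρ.trace = 1) :
    (ρ * (A₁ ⊗ₖ B₁ + A₁ ⊗ₖ B₂ + A₂ ⊗ₖ B₁ - A₂ ⊗ₖ B₂)).trace.re
      ≤ 2 * Real.sqrt 2 := by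
  set s : ℂ := ((Real.sqrt 2 : ℝ) : ℂ) with hs_def
  set C : Matrix (Fin dA × Fin dB) (Fin dA × Fin dB) ℂ :=
    A₁ ⊗ₖ B₁ + A₁ ⊗ₖ B₂ + A₂ ⊗ₖ B₁ - A₂ ⊗ₖ B₂ with hC_def
  set X₁ : Matrix (Fin dA × Fin dB) (Fin dA × Fin dB) ℂ :=
    A₁ ⊗ₖ (1 : Matrix (Fin dB) (Fin dB) ℂ) -
      s⁻¹ • ((1 : Matrix (Fin dA) (Fin dA) ℂ) ⊗ₖ (B₁ + B₂)) with hX₁_def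
  set X₂ : Matrix (Fin dA × Fin dB) (Fin dA × Fin dB) ℂ :=
    A₂ ⊗ₖ (1 : Matrix (Fin dB) (Fin dB) ℂ) -
      s⁻¹ • ((1 : Matrix (Fin dA) (Fin dA) ℂ) ⊗ₖ (B₁ - B₂)) with hX₂_def
  have hs2 : s * s = 2 := by
    have h : (Real.sqrt 2) * (Real.sqrt 2) = 2 := Real.mul_self_sqrt (by norm_num)
    simp only [hs_def, ← Complex.ofReal_mul, h]; norm_num
  have hs0 : s ≠ 0 := by
    intro h; rw [h, zero_mul] at hs2; norm_num at hs2
  have hsi : s⁻¹ * s⁻¹ = (2 : ℂ)⁻¹ := by rw [← mul_inv, hs2]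
  have hsi2 : s⁻¹ = (2 : ℂ)⁻¹ * s := by
    field_simp
    linear_combination -hs2
  have hstar : star s⁻¹ = s⁻¹ := by
    rw [star_inv₀]; simp [hs_def, Complex.star_def, Complex.conj_ofReal]
  -- Hermiticity of X₁ and X₂
  have hX₁h : X₁.IsHermitian := by
    simp only [Matrix.IsHermitian, hX₁_def, conjTranspose_sub, conjTranspose_smul,
      kron_conjTranspose, conjTranspose_add, conjTranspose_one, hA₁.eq, hB₁.eq, hB₂.eq, hstar]
  have hX₂h : X₂.IsHermitian := by
    simp only [Matrix.IsHermitian, hX₂_def, conjTranspose_sub, conjTranspose_smul,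
      kron_conjTranspose, conjTranspose_add, conjTranspose_one, hA₂.eq, hB₁.eq, hB₂.eq, hstar]
  -- the SOS identity
  have key : X₁ * X₁ + X₂ * X₂ =
      (4 : ℂ) • (1 : Matrix (Fin dA × Fin dB) (Fin dA × Fin dB) ℂ) - s • C := by
    simp only [hX₁_def, hX₂_def, hC_def, Matrix.sub_mul, Matrix.mul_sub, Matrix.smul_mul,
      Matrix.mul_smul, smul_smul, ← Matrix.mul_kronecker_mul, Matrix.mul_one, Matrix.one_mul,
      Matrix.mul_add, Matrix.add_mul, hA₁i, hA₂i, hB₁i, hB₂i,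
      kronecker_add, add_kronecker, kron_sub, one_kronecker_one, hsi]
    rw [hsi2]
    match_scalars <;> first | ring1 | linear_combination hs2
  have hkey2 : s • C = (4 : ℂ) • (1 : Matrix (Fin dA × Fin dB) (Fin dA × Fin dB) ℂ)
      - (X₁ * X₁ + X₂ * X₂) := by
    rw [key]; abel
  -- take traces
  have htr : s * (ρ * C).trace =
      4 - (ρ * (X₁ * X₁)).trace - (ρ * (X₂ * X₂)).trace := by
    have h1 : ρ * (s • C) = (4 : ℂ) • ρ - (ρ * (X₁ * X₁) + ρ * (X₂ * X₂)) := by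
      rw [hkey2, Matrix.mul_sub, Matrix.mul_add, Matrix.mul_smul, Matrix.mul_one]
    have h2 := congrArg Matrix.trace h1
    rw [Matrix.mul_smul, Matrix.trace_smul, Matrix.trace_sub, Matrix.trace_smul,
      Matrix.trace_add, hρtr] at h2
    rw [sub_sub]
    simpa [smul_eq_mul] using h2
  have ht1 := trace_rho_sq_nonneg hρ hX₁h
  have ht2 := trace_rho_sq_nonneg hρ hX₂h
  have hre : Real.sqrt 2 * (ρ * C).trace.re =
      4 - (ρ * (X₁ * X₁)).trace.re - (ρ * (X₂ * X₂)).trace.re := by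
    have := congrArg Complex.re htr
    simpa [hs_def, Complex.re_ofReal_mul] using this
  have hb : Real.sqrt 2 * (ρ * C).trace.re ≤ 4 := by
    rw [hre]; linarith
  nlinarith [Real.sq_sqrt (by norm_num : (2:ℝ) ≥ 0), Real.sqrt_nonneg 2, hb]
end

section
/- The correlation ℘^Ext_LF defined by ℘(a,b|x,y) = δ_{xy,1}δ_{a,−1}δ_{b,1} + (1/2)[δ_{x,1}δ_{a,−1}(1−δ_{y,1}) + δ_{y,1}δ_{b,1}(1−δ_{x,1})] + (1/4)[1 + (−1)^{xy−x−y}ab](1−δ_{x,1})(1−δ_{y,1}) satisfies the LF conditions: there exist P(c,d) and no-signalling conditional distributions realizing the LF decomposition. -/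
/-- Outcome values: `true ↦ +1`, `false ↦ −1`. -/
def val (t : Bool) : ℝ := if t then 1 else -1

/-- The LF conditions for the 3-setting, 2-outcome scenario (setting "1" is
index `0 : Fin 3`). -/
def IsLF (℘ : Bool → Bool → Fin 3 → Fin 3 → ℝ) : Prop :=
  ∃ (Pcd : Bool → Bool → ℝ)
    (Pb : Bool → Bool → Bool → Fin 3 → ℝ)
    (Pa : Bool → Bool → Bool → Fin 3 → ℝ)
    (PNS : Bool → Bool → Bool → Bool → Fin 3 → Fin 3 → ℝ),
    (∀ c d, 0 ≤ Pcd c d) ∧ (∑ c : Bool, ∑ d : Bool, Pcd c d = 1) ∧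
    (∀ b c d y, 0 ≤ Pb b c d y) ∧ (∀ c d y, ∑ b : Bool, Pb b c d y = 1) ∧
    (∀ a c d x, 0 ≤ Pa a c d x) ∧ (∀ c d x, ∑ a : Bool, Pa a c d x = 1) ∧
    (∀ a b c d x y, 0 ≤ PNS a b c d x y) ∧
    (∀ c d x y, ∑ a : Bool, ∑ b : Bool, PNS a b c d x y = 1) ∧
    -- P_NS is no-signalling in (x,y) for each (c,d)
    (∀ b c d x x' y, ∑ a : Bool, PNS a b c d x y = ∑ a : Bool, PNS a b c d x' y) ∧
    (∀ a c d x y y', ∑ b : Bool, PNS a b c d x y = ∑ b : Bool, PNS a b c d x y') ∧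
    (∀ a b y, ℘ a b 0 y
      = ∑ c : Bool, ∑ d : Bool, (if a = c then (1:ℝ) else 0) * Pb b c d y * Pcd c d) ∧
    (∀ a b x, ℘ a b x 0
      = ∑ c : Bool, ∑ d : Bool, (if b = d then (1:ℝ) else 0) * Pa a c d x * Pcd c d) ∧
    (∀ a b x y, x ≠ 0 → y ≠ 0 →
      ℘ a b x y = ∑ c : Bool, ∑ d : Bool, PNS a b c d x y * Pcd c d)

/-- The LF extreme point ℘^Ext_LF of the paper (Eq. S-point 2), with setting
labels x,y ∈ {1,2,3} (index `i : Fin 3` has label `i+1`). -/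
noncomputable def pExtLF (a b : Bool) (x y : Fin 3) : ℝ :=
  (if x = 0 then (1:ℝ) else 0) * (if y = 0 then (1:ℝ) else 0)
      * (if val a = -1 then (1:ℝ) else 0) * (if val b = 1 then (1:ℝ) else 0)
  + (1/2) * ((if x = 0 then (1:ℝ) else 0) * (if val a = -1 then (1:ℝ) else 0)
        * (1 - (if y = 0 then (1:ℝ) else 0))
      + (if y = 0 then (1:ℝ) else 0) * (if val b = 1 then (1:ℝ) else 0)
        * (1 - (if x = 0 then (1:ℝ) else 0)))
  + (1/4) * (1 + (-1:ℝ) ^ (((x:ℕ)+1) * ((y:ℕ)+1) - ((x:ℕ)+1) - ((y:ℕ)+1))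
        * val a * val b)
      * (1 - (if x = 0 then (1:ℝ) else 0)) * (1 - (if y = 0 then (1:ℝ) else 0))

noncomputable def myPcd (c d : Bool) : ℝ := (if c then 0 else 1) * (if d then 1 else 0)

noncomputable def myPb (b : Bool) (_c _d : Bool) (y : Fin 3) : ℝ :=
  if y = 0 then (if b then 1 else 0) else 1/2

noncomputable def myPa (a : Bool) (_c _d : Bool) (x : Fin 3) : ℝ :=
  if x = 0 then (if a then 0 else 1) else 1/2

noncomputable def myPNS (a b : Bool) (_c _d : Bool) (x y : Fin 3) : ℝ :=
  (1/4) * (1 + (-1:ℝ) ^ (((x:ℕ)+1) * ((y:ℕ)+1) - ((x:ℕ)+1) - ((y:ℕ)+1))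
        * val a * val b)

set_option maxHeartbeats 1000000 in
/-- the correlation ℘^Ext_LF satisfies the LF conditions. -/
theorem pExtLF_isLF : IsLF pExtLF := by
  refine ⟨myPcd, myPb, myPa, myPNS, ?_, ?_, ?_, ?_, ?_, ?_, ?_, ?_, ?_, ?_, ?_, ?_, ?_⟩
  · intro c d; unfold myPcd; split_ifs <;> norm_num
  · simp [myPcd]
  · intro b c d y; unfold myPb; split_ifs <;> norm_num
  · intro c d y; simp only [Fintype.sum_bool, myPb]; split_ifs <;> simp_all <;> norm_num
  · intro a c d x; unfold myPa; split_ifs <;> norm_num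
  · intro c d x; simp only [Fintype.sum_bool, myPa]; split_ifs <;> simp_all <;> norm_num
  · intro a b c d x y
    unfold myPNS val
    rcases Nat.even_or_odd (((x:ℕ)+1) * ((y:ℕ)+1) - ((x:ℕ)+1) - ((y:ℕ)+1)) with h | h
    · rw [h.neg_one_pow]; split_ifs <;> norm_num
    · rw [h.neg_one_pow]; split_ifs <;> norm_num
  · intro c d x y; simp [Fintype.sum_bool, myPNS, val]; ring
  · intro b c d x x' y; cases b <;> simp [Fintype.sum_bool, myPNS, val] <;> ring
  · intro a c d x y y'; cases a <;> simp [Fintype.sum_bool, myPNS, val] <;> ring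
  · intro a b y; fin_cases y <;> cases a <;> cases b <;>
      norm_num [pExtLF, myPb, myPcd, val, Fin.ext_iff]
  · intro a b x; fin_cases x <;> cases a <;> cases b <;>
      norm_num [pExtLF, myPa, myPcd, val, Fin.ext_iff]
  · intro a b x y hx hy; fin_cases x <;> fin_cases y <;>
      first
        | (exact absurd rfl hx)
        | (exact absurd rfl hy)
        | (cases a <;> cases b <;> norm_num [pExtLF, myPNS, myPcd, val, Fin.ext_iff])
end

section
/- Every LHV correlation with ±1-valued observables and three settings per party satisfies the I₃₃₂₂ inequality: −⟨A₁⟩ + ⟨A₂⟩ + ⟨B₁⟩ − ⟨B₂⟩ + ⟨A₁B₁⟩ − ⟨A₁B₂⟩ − ⟨A₁B₃⟩ − ⟨A₂B₁⟩ + ⟨A₂B₂⟩ − ⟨A₂B₃⟩ − ⟨A₃B₁⟩ − ⟨A₃B₂⟩ ≤ 4. -/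
lemma i3322_pointwise (a1 a2 a3 b1 b2 b3 : ℝ)
    (ha1 : a1 = 1 ∨ a1 = -1) (ha2 : a2 = 1 ∨ a2 = -1) (ha3 : a3 = 1 ∨ a3 = -1)
    (hb1 : b1 = 1 ∨ b1 = -1) (hb2 : b2 = 1 ∨ b2 = -1) (hb3 : b3 = 1 ∨ b3 = -1) :
    -a1 + a2 + b1 - b2 + a1*b1 - a1*b2 - a1*b3 - a2*b1 + a2*b2 - a2*b3
      - a3*b1 - a3*b2 ≤ 4 := by
  rcases ha1 with h|h <;> subst h <;>
  rcases ha2 with h|h <;> subst h <;>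
  rcases ha3 with h|h <;> subst h <;>
  rcases hb1 with h|h <;> subst h <;>
  rcases hb2 with h|h <;> subst h <;>
  rcases hb3 with h|h <;> subst h <;> norm_num

/-- Every LHV correlation with ±1-valued observables and three
settings per party satisfies the I₃₃₂₂ inequality.
Indexing: `A 0 = A₁, A 1 = A₂, A 2 = A₃`, similarly `B`. -/
theorem lhv_satisfies_I3322
    (Λ : Type) [Fintype Λ] (P : Λ → ℝ)
    (hP0 : ∀ l, 0 ≤ P l) (hP1 : ∑ l, P l = 1)
    (A B : Fin 3 → Λ → ℝ)
    (hA : ∀ x l, A x l = 1 ∨ A x l = -1)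
    (hB : ∀ y l, B y l = 1 ∨ B y l = -1) :
    -(∑ l, P l * A 0 l) + (∑ l, P l * A 1 l)
      + (∑ l, P l * B 0 l) - (∑ l, P l * B 1 l)
      + (∑ l, P l * (A 0 l * B 0 l)) - (∑ l, P l * (A 0 l * B 1 l))
      - (∑ l, P l * (A 0 l * B 2 l)) - (∑ l, P l * (A 1 l * B 0 l))
      + (∑ l, P l * (A 1 l * B 1 l)) - (∑ l, P l * (A 1 l * B 2 l))
      - (∑ l, P l * (A 2 l * B 0 l)) - (∑ l, P l * (A 2 l * B 1 l)) ≤ 4 := by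
  have key : ∀ l, P l * (-(A 0 l) + A 1 l + B 0 l - B 1 l
      + A 0 l * B 0 l - A 0 l * B 1 l - A 0 l * B 2 l - A 1 l * B 0 l
      + A 1 l * B 1 l - A 1 l * B 2 l - A 2 l * B 0 l - A 2 l * B 1 l)
      ≤ P l * 4 := fun l =>
    mul_le_mul_of_nonneg_left
      (i3322_pointwise _ _ _ _ _ _ (hA 0 l) (hA 1 l) (hA 2 l)
        (hB 0 l) (hB 1 l) (hB 2 l)) (hP0 l)
  calc
    _ = ∑ l, P l * (-(A 0 l) + A 1 l + B 0 l - B 1 l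
        + A 0 l * B 0 l - A 0 l * B 1 l - A 0 l * B 2 l - A 1 l * B 0 l
        + A 1 l * B 1 l - A 1 l * B 2 l - A 2 l * B 0 l - A 2 l * B 1 l) := by
      simp only [mul_add, mul_sub, mul_neg, Finset.sum_add_distrib,
        Finset.sum_sub_distrib, Finset.sum_neg_distrib]
    _ ≤ ∑ l, P l * 4 := Finset.sum_le_sum fun l _ => key l
    _ = 4 := by rw [← Finset.sum_mul, hP1, one_mul]
end

section
/- Every correlation satisfying the LF conditions in the 3-setting, 2-outcome scenario satisfies the Semi-Brukner inequality: ⟨A₂B₁⟩ + ⟨A₂B₂⟩ + ⟨A₃B₁⟩ − ⟨A₃B₂⟩ ≤ 2. -/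
/-- Correlator ⟨A_x B_y⟩ = Σ_{a,b} a·b·℘(a,b|x,y).
Settings in `Fin 3`: index 0 = setting 1, index 1 = setting 2, index 2 = setting 3. -/
def Corr (℘ : Bool → Bool → Fin 3 → Fin 3 → ℝ) (x y : Fin 3) : ℝ :=
  ∑ a : Bool, ∑ b : Bool, val a * val b * ℘ a b x y

/-- Every correlation satisfying the LF conditions (3 settings,
2 outcomes, with consistent marginals) satisfies the Semi-Brukner inequality
⟨A₂B₁⟩ + ⟨A₂B₂⟩ + ⟨A₃B₁⟩ − ⟨A₃B₂⟩ ≤ 2. -/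
theorem lf_satisfies_semi_brukner
    (℘ : Bool → Bool → Fin 3 → Fin 3 → ℝ)
    (Pcd : Bool → Bool → ℝ)
    (Pb : Bool → Bool → Bool → Fin 3 → ℝ)
    (Pa : Bool → Bool → Bool → Fin 3 → ℝ)
    (PNS : Bool → Bool → Bool → Bool → Fin 3 → Fin 3 → ℝ)
    (hPcd0 : ∀ c d, 0 ≤ Pcd c d) (hPcd1 : ∑ c : Bool, ∑ d : Bool, Pcd c d = 1)
    (hPb0 : ∀ b c d y, 0 ≤ Pb b c d y) (hPb1 : ∀ c d y, ∑ b : Bool, Pb b c d y = 1)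
    (hPa0 : ∀ a c d x, 0 ≤ Pa a c d x) (hPa1 : ∀ c d x, ∑ a : Bool, Pa a c d x = 1)
    (hPNS0 : ∀ a b c d x y, 0 ≤ PNS a b c d x y)
    (hPNS1 : ∀ c d x y, ∑ a : Bool, ∑ b : Bool, PNS a b c d x y = 1)
    (hNSa : ∀ b c d x x' y, ∑ a : Bool, PNS a b c d x y = ∑ a : Bool, PNS a b c d x' y)
    (hNSb : ∀ a c d x y y', ∑ b : Bool, PNS a b c d x y = ∑ b : Bool, PNS a b c d x y')
    -- consistent marginals between the cases
    (hconsA : ∀ a c d x y, x ≠ 0 → y ≠ 0 → ∑ b : Bool, PNS a b c d x y = Pa a c d x)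
    (hconsB : ∀ b c d x y, x ≠ 0 → y ≠ 0 → ∑ a : Bool, PNS a b c d x y = Pb b c d y)
    -- three-case LF decomposition
    (hx1 : ∀ a b y, ℘ a b 0 y
      = ∑ c : Bool, ∑ d : Bool, (if a = c then (1:ℝ) else 0) * Pb b c d y * Pcd c d)
    (hy1 : ∀ a b x, ℘ a b x 0
      = ∑ c : Bool, ∑ d : Bool, (if b = d then (1:ℝ) else 0) * Pa a c d x * Pcd c d)
    (hxy : ∀ a b x y, x ≠ 0 → y ≠ 0 →
      ℘ a b x y = ∑ c : Bool, ∑ d : Bool, PNS a b c d x y * Pcd c d) :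
    Corr ℘ 1 0 + Corr ℘ 1 1 + Corr ℘ 2 0 - Corr ℘ 2 1 ≤ 2 := by

  -- per-(c,d) expression
  set G : Bool → Bool → ℝ := fun c d =>
    val d * (∑ a : Bool, val a * Pa a c d 1)
    + (∑ a : Bool, ∑ b : Bool, val a * val b * PNS a b c d 1 1)
    + val d * (∑ a : Bool, val a * Pa a c d 2)
    - (∑ a : Bool, ∑ b : Bool, val a * val b * PNS a b c d 2 1) with hG
  have key : ∀ c d : Bool, G c d ≤ 2 := by
    intro c d
    have hA1t := hconsA true c d 1 1 (by decide) (by decide)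
    have hA1f := hconsA false c d 1 1 (by decide) (by decide)
    have hA2t := hconsA true c d 2 1 (by decide) (by decide)
    have hA2f := hconsA false c d 2 1 (by decide) (by decide)
    have hB1t := hconsB true c d 1 1 (by decide) (by decide)
    have hB1f := hconsB false c d 1 1 (by decide) (by decide)
    have hB2t := hconsB true c d 2 1 (by decide) (by decide)
    have hB2f := hconsB false c d 2 1 (by decide) (by decide)
    have h1 := hPNS1 c d 1 1
    have n1 := hPNS0 true true c d 1 1
    have n2 := hPNS0 true false c d 1 1
    have n3 := hPNS0 false true c d 1 1
    have n4 := hPNS0 false false c d 1 1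
    have m1 := hPNS0 true true c d 2 1
    have m2 := hPNS0 true false c d 2 1
    have m3 := hPNS0 false true c d 2 1
    have m4 := hPNS0 false false c d 2 1
    simp only [hG, Fintype.sum_bool, val] at *
    cases d <;> simp at * <;> linarith
  have hrw : Corr ℘ 1 0 + Corr ℘ 1 1 + Corr ℘ 2 0 - Corr ℘ 2 1
      = ∑ c : Bool, ∑ d : Bool, Pcd c d * G c d := by
    have e11 : ∀ a b, ℘ a b 1 1 = ∑ c : Bool, ∑ d : Bool, PNS a b c d 1 1 * Pcd c d :=
      fun a b => hxy a b 1 1 (by decide) (by decide)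
    have e21 : ∀ a b, ℘ a b 2 1 = ∑ c : Bool, ∑ d : Bool, PNS a b c d 2 1 * Pcd c d :=
      fun a b => hxy a b 2 1 (by decide) (by decide)
    simp only [Corr, hG, hy1, e11, e21, Fintype.sum_bool, val]
    norm_num
    ring
  rw [hrw]
  calc ∑ c : Bool, ∑ d : Bool, Pcd c d * G c d
      ≤ ∑ c : Bool, ∑ d : Bool, Pcd c d * 2 := by
        apply Finset.sum_le_sum; intro c _
        apply Finset.sum_le_sum; intro d _
        exact mul_le_mul_of_nonneg_left (key c d) (hPcd0 c d)
    _ = 2 := by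
        simp only [Fintype.sum_bool] at hPcd1 ⊢
        linarith
end

section
/- The set of LF correlations is a strict superset of the set of LHV correlations in the 3-setting, 2-outcome bipartite scenario: every LHV correlation is an LF correlation, and there exists an LF correlation (e.g., the extreme point ℘^Ext_LF combining deterministic first settings with a PR box on settings 2,3) that is not an LHV correlation. -/
/-- LHV model for the 3-setting, 2-outcome scenario: a mixture over a finite
probability space of deterministic assignments. -/
def IsLHV (℘ : Bool → Bool → Fin 3 → Fin 3 → ℝ) : Prop :=
  ∃ (m : ℕ) (P : Fin m → ℝ) (A B : Fin 3 → Fin m → Bool),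
    (∀ l, 0 ≤ P l) ∧ (∑ l, P l = 1) ∧
    ∀ a b x y, ℘ a b x y
      = ∑ l, (if a = A x l then (1:ℝ) else 0) * (if b = B y l then (1:ℝ) else 0) * P l

/-!
An LHV model is turned into an LF model by conditioning the hidden variable on the pair of
outcomes `(c, d)` that it assigns to setting 1: the conditional laws of the remaining outcomes
are the LF conditionals, and they are no-signalling because they are marginals of one joint law.

Conversely, an LHV model gives positive weight to some deterministic strategy, so each outcome
pair it prescribes has positive probability. For `℘^Ext_LF` this would force
`a₂ ⊕ b₂ = a₂ ⊕ b₃ = a₃ ⊕ b₂ = 0` and `a₃ ⊕ b₃ = 1` (the PR box on settings 2, 3), whose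
sum is `0 = 1`.
-/

section FiberWeight

variable {ι α β γ : Type*} [Fintype ι] [DecidableEq α] [DecidableEq β] [DecidableEq γ]

def fiberWeight (P : ι → ℝ) (g : ι → α) (a : α) : ℝ := ∑ l with g l = a, P l

lemma fiberWeight_nonneg {P : ι → ℝ} (hP : ∀ l, 0 ≤ P l) (g : ι → α) (a : α) :
    0 ≤ fiberWeight P g a :=
  Finset.sum_nonneg fun l _ => hP l

lemma sum_fiberWeight [Fintype α] (P : ι → ℝ) (g : ι → α) :
    ∑ a, fiberWeight P g a = ∑ l, P l :=
  Finset.sum_fiberwise _ _ _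

lemma fiberWeight_congr {P : ι → ℝ} {g : ι → α} {g' : ι → β} {a : α} {b : β}
    (h : ∀ l, g l = a ↔ g' l = b) : fiberWeight P g a = fiberWeight P g' b := by
  simp only [fiberWeight, h]

lemma sum_fiberWeight_pair_fst [Fintype α] (P : ι → ℝ) (g₁ : ι → α) (g₂ : ι → β) (b : β) :
    ∑ a, fiberWeight P (fun l => (g₁ l, g₂ l)) (a, b) = fiberWeight P g₂ b := by
  rw [fiberWeight, ← Finset.sum_fiberwise _ g₁]
  simp only [fiberWeight, Finset.filter_filter, Prod.ext_iff, and_comm]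

lemma sum_fiberWeight_pair_snd [Fintype β] (P : ι → ℝ) (g₁ : ι → α) (g₂ : ι → β) (a : α) :
    ∑ b, fiberWeight P (fun l => (g₁ l, g₂ l)) (a, b) = fiberWeight P g₁ a := by
  rw [fiberWeight, ← Finset.sum_fiberwise _ g₂]
  simp only [fiberWeight, Finset.filter_filter, Prod.ext_iff]

lemma fiberWeight_pair_le {P : ι → ℝ} (hP : ∀ l, 0 ≤ P l) (f : ι → β) (g : ι → γ)
    (b : β) (o : γ) :
    fiberWeight P (fun l => (f l, g l)) (b, o) ≤ fiberWeight P f b :=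
  Finset.sum_le_sum_of_subset_of_nonneg
    (Finset.monotone_filter_right _ fun _ _ h => (Prod.ext_iff.mp h).1) fun l _ _ => hP l

lemma sum_ite_mul_ite_mul_eq_fiberWeight (P : ι → ℝ) (g₁ : ι → α) (g₂ : ι → β)
    (a : α) (b : β) :
    ∑ l, (if a = g₁ l then (1 : ℝ) else 0) * (if b = g₂ l then (1 : ℝ) else 0) * P l
      = fiberWeight P (fun l => (g₁ l, g₂ l)) (a, b) := by
  rw [fiberWeight, Finset.sum_filter]
  refine Finset.sum_congr rfl fun l _ => ?_
  by_cases ha : a = g₁ l <;> by_cases hb : b = g₂ l <;> simp [ha, hb, eq_comm]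

/-- On a null fibre of `f` this falls back to the unconditional law of `g`, so that the
conditionals always keep the marginals of the unconditional weights. -/
noncomputable def condWeight (P : ι → ℝ) (f : ι → β) (g : ι → γ) (b : β) (o : γ) : ℝ :=
  if fiberWeight P f b = 0 then fiberWeight P g o
  else fiberWeight P (fun l => (f l, g l)) (b, o) / fiberWeight P f b

lemma condWeight_nonneg {P : ι → ℝ} (hP : ∀ l, 0 ≤ P l) (f : ι → β) (g : ι → γ)
    (b : β) (o : γ) :
    0 ≤ condWeight P f g b o := by
  unfold condWeight
  split_ifs
  · exact fiberWeight_nonneg hP g o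
  · exact div_nonneg (fiberWeight_nonneg hP _ _) (fiberWeight_nonneg hP f b)

lemma sum_condWeight [Fintype γ] {P : ι → ℝ} (hP : ∑ l, P l = 1) (f : ι → β) (g : ι → γ)
    (b : β) :
    ∑ o, condWeight P f g b o = 1 := by
  unfold condWeight
  split_ifs with h
  · rw [sum_fiberWeight, hP]
  · rw [← Finset.sum_div, sum_fiberWeight_pair_snd, div_self h]

lemma condWeight_mul_fiberWeight {P : ι → ℝ} (hP : ∀ l, 0 ≤ P l) (f : ι → β) (g : ι → γ)
    (b : β) (o : γ) :
    condWeight P f g b o * fiberWeight P f b = fiberWeight P (fun l => (f l, g l)) (b, o) := by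
  unfold condWeight
  split_ifs with h
  · rw [h, mul_zero]
    exact (le_antisymm (h ▸ fiberWeight_pair_le hP f g b o) (fiberWeight_nonneg hP _ _)).symm
  · exact div_mul_cancel₀ _ h

lemma sum_condWeight_mul_fiberWeight [Fintype β] {P : ι → ℝ} (hP : ∀ l, 0 ≤ P l)
    (f : ι → β) (g : ι → γ) (o : γ) :
    ∑ b, condWeight P f g b o * fiberWeight P f b = fiberWeight P g o := by
  simp only [condWeight_mul_fiberWeight hP, sum_fiberWeight_pair_fst]

lemma sum_condWeight_pair_fst [Fintype α] (P : ι → ℝ) (f : ι → β) (g₁ : ι → α) (g₂ : ι → γ)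
    (b : β) (o : γ) :
    ∑ a, condWeight P f (fun l => (g₁ l, g₂ l)) b (a, o) = condWeight P f g₂ b o := by
  unfold condWeight
  split_ifs
  · exact sum_fiberWeight_pair_fst P g₁ g₂ o
  · rw [← Finset.sum_div, ← sum_fiberWeight_pair_fst P g₁ (fun l => (f l, g₂ l)) (b, o)]
    congr 1
    refine Finset.sum_congr rfl fun a _ => fiberWeight_congr fun l => ?_
    simp only [Prod.ext_iff]
    tauto

lemma sum_condWeight_pair_snd [Fintype γ] (P : ι → ℝ) (f : ι → β) (g₁ : ι → α) (g₂ : ι → γ)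
    (b : β) (a : α) :
    ∑ o, condWeight P f (fun l => (g₁ l, g₂ l)) b (a, o) = condWeight P f g₁ b a := by
  unfold condWeight
  split_ifs
  · exact sum_fiberWeight_pair_snd P g₁ g₂ a
  · rw [← Finset.sum_div, ← sum_fiberWeight_pair_snd P (fun l => (f l, g₁ l)) g₂ (b, a)]
    congr 1
    refine Finset.sum_congr rfl fun o _ => fiberWeight_congr fun l => ?_
    simp only [Prod.ext_iff]
    tauto

end FiberWeight

theorem IsLHV.isLF {℘ : Bool → Bool → Fin 3 → Fin 3 → ℝ} (h : IsLHV ℘) : IsLF ℘ := by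
  obtain ⟨m, P, A, B, hP, hP1, h℘⟩ := h
  simp only [sum_ite_mul_ite_mul_eq_fiberWeight] at h℘
  set f : Fin m → Bool × Bool := fun l => (A 0 l, B 0 l)
  refine ⟨fun c d => fiberWeight P f (c, d), fun b c d y => condWeight P f (B y) (c, d) b,
    fun a c d x => condWeight P f (A x) (c, d) a,
    fun a b c d x y => condWeight P f (fun l => (A x l, B y l)) (c, d) (a, b),
    fun _ _ => fiberWeight_nonneg hP f _, ?_,
    fun _ _ _ _ => condWeight_nonneg hP f _ _ _, fun _ _ _ => sum_condWeight hP1 f _ _,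
    fun _ _ _ _ => condWeight_nonneg hP f _ _ _, fun _ _ _ => sum_condWeight hP1 f _ _,
    fun _ _ _ _ _ _ => condWeight_nonneg hP f _ _ _, ?_, ?_, ?_, ?_, ?_, ?_⟩
  · rw [← Fintype.sum_prod_type' (fun c d => fiberWeight P f (c, d)), sum_fiberWeight, hP1]
  · intro c d x y
    rw [← Fintype.sum_prod_type' (fun a b => condWeight P f _ (c, d) (a, b)), sum_condWeight hP1]
  · intro b c d x x' y
    rw [sum_condWeight_pair_fst, sum_condWeight_pair_fst]
  · intro a c d x y y'
    rw [sum_condWeight_pair_snd, sum_condWeight_pair_snd]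
  · intro a b y
    simp only [condWeight_mul_fiberWeight hP, ite_mul, one_mul, zero_mul,
      Finset.sum_ite_irrel, Finset.sum_const_zero, Finset.sum_ite_eq, Finset.mem_univ, if_true, h℘]
    rw [← sum_fiberWeight_pair_fst P (B 0) (fun l => (A 0 l, B y l))]
    refine Finset.sum_congr rfl fun d _ => fiberWeight_congr fun l => ?_
    simp only [f, Prod.ext_iff]
    tauto
  · intro a b x
    simp only [condWeight_mul_fiberWeight hP, ite_mul, one_mul, zero_mul,
      Finset.sum_ite_eq, Finset.mem_univ, if_true, h℘]
    rw [← sum_fiberWeight_pair_fst P (A 0) (fun l => (A x l, B 0 l))]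
    refine Finset.sum_congr rfl fun c _ => fiberWeight_congr fun l => ?_
    simp only [f, Prod.ext_iff]
    tauto
  · intro a b x y _ _
    rw [h℘, ← Fintype.sum_prod_type'
      (fun c d => condWeight P f _ (c, d) (a, b) * fiberWeight P f (c, d)),
      sum_condWeight_mul_fiberWeight hP]

theorem IsLHV.exists_deterministic_pos {℘ : Bool → Bool → Fin 3 → Fin 3 → ℝ} (h : IsLHV ℘) :
    ∃ A B : Fin 3 → Bool, ∀ x y, 0 < ℘ (A x) (B y) x y := by
  obtain ⟨m, P, A, B, hP, hP1, h℘⟩ := h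
  obtain ⟨l₀, -, hl₀⟩ : ∃ l ∈ Finset.univ, (0 : ℝ) < P l :=
    Finset.exists_lt_of_sum_lt (by simp [hP1])
  refine ⟨fun x => A x l₀, fun y => B y l₀, fun x y => ?_⟩
  rw [h℘]
  refine hl₀.trans_le ?_
  have hterm : ∀ l, 0 ≤ ((if A x l₀ = A x l then (1 : ℝ) else 0) *
      if B y l₀ = B y l then 1 else 0) * P l := fun l => mul_nonneg (by positivity) (hP l)
  exact le_of_eq_of_le (by simp) (Finset.single_le_sum (fun l _ => hterm l) (Finset.mem_univ l₀))

noncomputable def extMarginal (o : Bool) (x : Fin 3) : ℝ :=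
  if x = 0 then (if o = true then 1 else 0) else 1 / 2

noncomputable def prBox (a b : Bool) (x y : Fin 3) : ℝ :=
  if xor a b = (decide (x = 2) && decide (y = 2)) then 1 / 2 else 0

/-- The paper's `℘^Ext_LF`. -/
noncomputable def pExt (a b : Bool) (x y : Fin 3) : ℝ :=
  if x = 0 ∨ y = 0 then extMarginal a x * extMarginal b y else prBox a b x y

lemma extMarginal_nonneg (o : Bool) (x : Fin 3) : 0 ≤ extMarginal o x := by
  unfold extMarginal; split_ifs <;> norm_num

lemma sum_extMarginal (x : Fin 3) : ∑ o, extMarginal o x = 1 := by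
  by_cases hx : x = 0 <;> simp [extMarginal, hx]

lemma prBox_nonneg (a b : Bool) (x y : Fin 3) : 0 ≤ prBox a b x y := by
  unfold prBox; split_ifs <;> norm_num

lemma sum_prBox_fst (b : Bool) (x y : Fin 3) : ∑ a, prBox a b x y = 1 / 2 := by
  cases b <;> simp [prBox]

lemma sum_prBox_snd (a : Bool) (x y : Fin 3) : ∑ b, prBox a b x y = 1 / 2 := by
  cases a <;> simp [prBox]

lemma prBox_pos_iff {a b : Bool} {x y : Fin 3} :
    0 < prBox a b x y ↔ xor a b = (decide (x = 2) && decide (y = 2)) := by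
  unfold prBox; split_ifs with h <;> simp [h]

lemma pExt_isLF : IsLF pExt := by
  refine ⟨fun c d => if c = true ∧ d = true then 1 else 0, fun b _ _ y => extMarginal b y,
    fun a _ _ x => extMarginal a x, fun a b _ _ x y => prBox a b x y,
    ?_, ?_, fun b _ _ y => extMarginal_nonneg b y, fun _ _ y => sum_extMarginal y,
    fun a _ _ x => extMarginal_nonneg a x, fun _ _ x => sum_extMarginal x,
    fun a b _ _ x y => prBox_nonneg a b x y, ?_, ?_, ?_, ?_, ?_, ?_⟩
  · intro _ _; positivity
  · simp only [Fintype.sum_bool]; norm_num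
  · intro _ _ x y
    show ∑ a, ∑ b, prBox a b x y = 1
    simp only [sum_prBox_snd]
    norm_num
  · intro b _ _ x x' y; simp only [sum_prBox_fst]
  · intro a _ _ x y y'; simp only [sum_prBox_snd]
  · intro a b y; cases a <;> simp [pExt, extMarginal]
  · intro a b x; cases b <;> simp [pExt, extMarginal]
  · intro a b x y hx hy; simp [pExt, hx, hy]

lemma pExt_not_isLHV : ¬ IsLHV pExt := by
  intro h
  obtain ⟨A, B, hpos⟩ := h.exists_deterministic_pos
  have hPR : ∀ x y, x ≠ 0 → y ≠ 0 → xor (A x) (B y) = (decide (x = 2) && decide (y = 2)) :=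
    fun x y hx hy => prBox_pos_iff.mp (by simpa [pExt, hx, hy] using hpos x y)
  have h11 : A 1 = B 1 := by simpa using hPR 1 1 (by decide) (by decide)
  have h12 : A 1 = B 2 := by simpa using hPR 1 2 (by decide) (by decide)
  have h21 : A 2 = B 1 := by simpa using hPR 2 1 (by decide) (by decide)
  have h22 : A 2 ≠ B 2 := by simpa using hPR 2 2 (by decide) (by decide)
  exact h22 (h21.trans (h11.symm.trans h12))

/-- In the 3-setting, 2-outcome bipartite scenario, the LF
correlations form a strict superset of the LHV correlations: every LHV
correlation is LF, and some LF correlation is not LHV. -/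
theorem lf_strict_superset_of_lhv :
    (∀ ℘ : Bool → Bool → Fin 3 → Fin 3 → ℝ, IsLHV ℘ → IsLF ℘) ∧
    (∃ ℘ : Bool → Bool → Fin 3 → Fin 3 → ℝ, IsLF ℘ ∧ ¬ IsLHV ℘) :=
  ⟨fun _ => IsLHV.isLF, pExt, pExt_isLF, pExt_not_isLHV⟩
end
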